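/- arXiv:1204.4823 — 3 statements merged into one kernel-verified Lean document; each statement's English description precedes it below -/
import Mathlib

section
/- Let ω^{ij}(x) be an antisymmetric Poisson bivector on R^N. Define the second-order coefficient Γ^{ijk} = (1/24) ω^{km}∂_mω^{ij} + (1/24) ω^{jm}∂_mω^{ik}. Then Γ^{ijk} is symmetric in (j,k) and satisfies 8(Γ^{ijk} − Γ^{jik}) = −ω^{mk}∂_mω^{ij}. -/
open scoped BigOperators

noncomputable def pd {n : ℕ} (σ : Fin n) (f : (Fin n → ℝ) → ℝ) (x : Fin n → ℝ) : ℝ :=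
  fderiv ℝ f x (Pi.single σ 1)

/-- For an antisymmetric Poisson bivector `ω` on `ℝ^N`, the coefficient
`Γ^{ijk} = (1/24) ω^{km}∂_mω^{ij} + (1/24) ω^{jm}∂_mω^{ik}` is symmetric in `(j,k)` and
satisfies `8(Γ^{ijk} − Γ^{jik}) = −ω^{mk}∂_mω^{ij}`. -/
theorem gamma_second_order (Nn : ℕ)
    (ω : (Fin Nn → ℝ) → Matrix (Fin Nn) (Fin Nn) ℝ)
    (hω : ∀ i j, ContDiff ℝ (⊤ : ℕ∞) fun x => ω x i j)
    (hanti : ∀ x i j, ω x i j = - ω x j i)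
    (hjac : ∀ x i j k,
      (∑ l, ω x i l * pd l (fun y => ω y j k) x) +
      (∑ l, ω x k l * pd l (fun y => ω y i j) x) +
      (∑ l, ω x j l * pd l (fun y => ω y k i) x) = 0)
    (Γ : Fin Nn → Fin Nn → Fin Nn → (Fin Nn → ℝ) → ℝ)
    (hΓ : ∀ i j k x, Γ i j k x =
      (1 / 24) * (∑ m, ω x k m * pd m (fun y => ω y i j) x) +
      (1 / 24) * (∑ m, ω x j m * pd m (fun y => ω y i k) x)) :
    ∀ (x : Fin Nn → ℝ) (i j k : Fin Nn),
      Γ i j k x = Γ i k j x ∧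
      8 * (Γ i j k x - Γ j i k x) = - ∑ m, ω x m k * pd m (fun y => ω y i j) x := by

  intro x i j k
  have hpd : ∀ (m a b : Fin Nn), pd m (fun y => ω y a b) x = - pd m (fun y => ω y b a) x := by
    intro m a b
    have h : (fun y => ω y a b) = (fun y => -(ω y b a)) := funext fun y => hanti y a b
    simp only [pd, h, fderiv_neg]
    simp
  constructor
  · rw [hΓ, hΓ]; ring
  · rw [hΓ, hΓ]
    have hd : (∑ l, ω x j l * pd l (fun y => ω y k i) x)
        = - ∑ m, ω x j m * pd m (fun y => ω y i k) x := by
      rw [← Finset.sum_neg_distrib]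
      refine Finset.sum_congr rfl fun m _ => ?_
      rw [hpd m k i]; ring
    have hc : (∑ m, ω x k m * pd m (fun y => ω y j i) x)
        = - ∑ m, ω x k m * pd m (fun y => ω y i j) x := by
      rw [← Finset.sum_neg_distrib]
      refine Finset.sum_congr rfl fun m _ => ?_
      rw [hpd m j i]; ring
    have hrhs : (∑ m, ω x m k * pd m (fun y => ω y i j) x)
        = - ∑ m, ω x k m * pd m (fun y => ω y i j) x := by
      rw [← Finset.sum_neg_distrib]
      refine Finset.sum_congr rfl fun m _ => ?_
      rw [hanti x m k]; ring
    have hj := hjac x i j k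
    rw [hd] at hj
    rw [hc, hrhs]
    linarith [hj]
end

section
/- For n > 1, if G^{ij i_2…i_n} is antisymmetric in (i,j), symmetric in (i_2,…,i_n), and satisfies the Bianchi-type identity G^{i j k i_3…i_n} + G^{j k i i_3…i_n} + G^{k i j i_3…i_n} = 0, then Γ^{j i_1…i_n} = (1/(n(n+1)))(G^{j i_1 i_2…i_n} + G^{j i_2 i_1 i_3…i_n} + … + G^{j i_n i_1…i_{n−1}}) is totally symmetric in (i_1,…,i_n) and satisfies n(Γ^{[ij] i_2…i_n}) = G^{i j i_2 … i_n}, where Γ^{[ij]…} = Γ^{ij…} − Γ^{ji…}. -/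
open scoped BigOperators

lemma exists_perm_comp_eq {m k : ℕ} (f g : Fin m → Fin k)
    (hf : Function.Injective f) (hg : Function.Injective g)
    (h : Set.range f = Set.range g) : ∃ τ : Equiv.Perm (Fin m), g ∘ τ = f := by
  refine ⟨(Equiv.ofInjective f hf).trans ((Equiv.setCongr h).trans
    (Equiv.ofInjective g hg).symm), ?_⟩
  funext x
  simp [Equiv.apply_ofInjective_symm hg]

/-- For `n = m + 1 > 1`: if `G^{i j i_2…i_n}` (with `m = n−1` trailing indices) is antisymmetric
in `(i,j)`, symmetric in its trailing indices, and satisfies the Bianchi-type cyclic identity,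
then `Γ^{j i_1…i_n} = (1/(n(n+1))) Σ_s G^{j i_s (rest)}` is totally symmetric in `(i_1,…,i_n)`
and satisfies `n(Γ^{ij i_2…i_n} − Γ^{ji i_2…i_n}) = G^{ij i_2…i_n}`. -/
theorem gamma_solves_antisymmetrization (N m : ℕ) (hm : 0 < m)
    (G : Fin N → Fin N → (Fin m → Fin N) → ℝ)
    (hsymm : ∀ (i j : Fin N) (v : Fin m → Fin N) (σ : Equiv.Perm (Fin m)),
      G i j (v ∘ σ) = G i j v)
    (hanti : ∀ (i j : Fin N) (v : Fin m → Fin N), G i j v = - G j i v)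
    (hbianchi : ∀ (i j : Fin N) (v : Fin m → Fin N),
      G i j v + G j (v ⟨0, hm⟩) (Function.update v ⟨0, hm⟩ i) +
        G (v ⟨0, hm⟩) i (Function.update v ⟨0, hm⟩ j) = 0)
    (Γ : Fin N → (Fin (m + 1) → Fin N) → ℝ)
    (hΓ : ∀ (j : Fin N) (v : Fin (m + 1) → Fin N),
      Γ j v = (1 / (((m : ℝ) + 1) * ((m : ℝ) + 2))) *
        ∑ s : Fin (m + 1), G j (v s) (fun t => v (s.succAbove t))) :
    (∀ (j : Fin N) (v : Fin (m + 1) → Fin N) (σ : Equiv.Perm (Fin (m + 1))),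
      Γ j (v ∘ σ) = Γ j v) ∧
    (∀ (i j : Fin N) (w : Fin m → Fin N),
      ((m : ℝ) + 1) * (Γ i (Fin.cons j w) - Γ j (Fin.cons i w)) = G i j w) := by
  constructor
  · intro j v σ
    rw [hΓ, hΓ]
    congr 1
    refine Fintype.sum_equiv σ _ _ ?_
    intro s
    have hinj1 : Function.Injective (⇑σ ∘ s.succAbove) :=
      σ.injective.comp Fin.succAbove_right_injective
    have hinj2 : Function.Injective (σ s).succAbove := Fin.succAbove_right_injective
    have hrange : Set.range (⇑σ ∘ s.succAbove) = Set.range (σ s).succAbove := by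
      rw [Set.range_comp, Fin.range_succAbove, Fin.range_succAbove,
        ← Set.image_singleton, ← Set.image_compl_eq σ.bijective]
    obtain ⟨τ, hτ⟩ := exists_perm_comp_eq _ _ hinj1 hinj2 hrange
    have : (fun t => v (σ (s.succAbove t))) = (fun t => v ((σ s).succAbove t)) ∘ τ := by
      funext t
      exact (congrArg v (congrFun hτ t)).symm
    show G j (v (σ s)) (fun t => v (σ (s.succAbove t))) = _
    rw [this, hsymm]
  · intro i j w
    obtain ⟨k, rfl⟩ : ∃ k, m = k + 1 := ⟨m - 1, (Nat.succ_pred_eq_of_pos hm).symm⟩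
    have key : ∀ a b : Fin N,
        Γ a (Fin.cons b w) = (1 / (((k : ℝ) + 1 + 1) * ((k : ℝ) + 1 + 2))) *
          (G a b w + ∑ s : Fin (k + 1), G a (w s) (Fin.cons b (w ∘ s.succAbove))) := by
      intro a b
      have hsum0 : (∑ s : Fin (k + 1 + 1), G a ((Fin.cons b w : Fin (k + 1 + 1) → Fin N) s)
            (fun t => (Fin.cons b w : Fin (k + 1 + 1) → Fin N) (s.succAbove t)))
          = G a b w + ∑ s : Fin (k + 1), G a (w s) (Fin.cons b (w ∘ s.succAbove)) := by
        have h0 : (fun t => (Fin.cons b w : Fin (k + 1 + 1) → Fin N)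
            ((0 : Fin (k + 1 + 1)).succAbove t)) = w := by
          funext t
          rw [Fin.succAbove_zero]
          simp
        have htail : ∀ s : Fin (k + 1),
            (fun t => (Fin.cons b w : Fin (k + 1 + 1) → Fin N) ((s.succ).succAbove t))
              = (Fin.cons b (w ∘ s.succAbove) : Fin (k + 1) → Fin N) := by
          intro s
          funext t
          refine Fin.cases ?_ (fun u => ?_) t
          · simp
          · simp [Fin.succ_succAbove_succ]
        simp only [Fin.sum_univ_succ, Fin.cons_zero, Fin.cons_succ, h0, htail]
      rw [hΓ, hsum0]
      push_cast
      ring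
    rw [key, key]
    -- per-term identity
    have hterm : ∀ s : Fin (k + 1),
        G i (w s) (Fin.cons j (w ∘ s.succAbove)) - G j (w s) (Fin.cons i (w ∘ s.succAbove))
          = G i j w := by
      intro s
      have hb := hbianchi i (w s) (Fin.cons j (w ∘ s.succAbove))
      have h00 : (⟨0, hm⟩ : Fin (k + 1)) = 0 := rfl
      rw [h00] at hb
      simp only [Fin.cons_zero, Fin.update_cons_zero] at hb
      have ha1 := hanti (w s) j (Fin.cons i (w ∘ s.succAbove))
      have ha2 := hanti j i (Fin.cons (w s) (w ∘ s.succAbove))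
      -- rewrite G i j (cons (w s) rest) = G i j w
      have hperm : ∃ τ : Equiv.Perm (Fin (k + 1)),
          w ∘ τ = Fin.cons (w s) (w ∘ s.succAbove) := by
        refine ⟨(finSuccEquiv k).trans (finSuccEquiv' s).symm, ?_⟩
        funext t
        refine Fin.cases ?_ (fun u => ?_) t
        · simp
        · simp
      obtain ⟨τ, hτ⟩ := hperm
      have hw : G i j (Fin.cons (w s) (w ∘ s.succAbove)) = G i j w := by
        rw [← hτ, hsymm]
      have hw' : G j i (Fin.cons (w s) (w ∘ s.succAbove)) = G j i w := by
        have hτ' : w ∘ τ = Fin.cons (w s) (w ∘ s.succAbove) := hτ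
        rw [← hτ', hsymm]
      rw [hw'] at ha2
      have hGji : G j i w = - G i j w := hanti j i w
      linarith [hb, ha1, ha2, hanti i (w s) (Fin.cons j (w ∘ s.succAbove)),
        hanti j (w s) (Fin.cons i (w ∘ s.succAbove))]
    have hsum : ∑ s : Fin (k + 1),
        (G i (w s) (Fin.cons j (w ∘ s.succAbove)) - G j (w s) (Fin.cons i (w ∘ s.succAbove)))
          = ((k : ℝ) + 1) * G i j w := by
      rw [Finset.sum_congr rfl (fun s _ => hterm s)]
      simp [Finset.sum_const, mul_comm]
    rw [Finset.sum_sub_distrib] at hsum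
    have hGji : G j i w = - G i j w := hanti j i w
    have hne : (((k : ℝ) + 1 + 1) * ((k : ℝ) + 1 + 2)) ≠ 0 := by positivity
    push_cast
    field_simp
    nlinarith [hsum, hGji]
end

section
/- Let μ: R^N → R be smooth and positive and let ω^{ij} be an antisymmetric Poisson bivector satisfying ∂_i(μ ω^{ij}) = 0 for all j. Then the matrix ∂_l(μ ω^{ij}∂_jω^{lk}) is symmetric in (i,k): ∂_l(μ ω^{ij}∂_jω^{lk}) = ∂_l(μ ω^{kj}∂_jω^{li}). -/
open scoped BigOperators

section PdAux

variable {n : ℕ}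

lemma pd_congr {σ : Fin n} {f g : (Fin n → ℝ) → ℝ} (h : ∀ y, f y = g y) (x : Fin n → ℝ) :
    pd σ f x = pd σ g x := by
  have : f = g := funext h
  rw [this]

lemma pd_contDiff {σ : Fin n} {f : (Fin n → ℝ) → ℝ} (hf : ContDiff ℝ (⊤ : ℕ∞) f) :
    ContDiff ℝ (⊤ : ℕ∞) fun x => pd σ f x :=
  (hf.fderiv_right (by simp)).clm_apply contDiff_const

lemma pd_add {σ : Fin n} {f g : (Fin n → ℝ) → ℝ} (hf : ContDiff ℝ (⊤ : ℕ∞) f)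
    (hg : ContDiff ℝ (⊤ : ℕ∞) g) (x : Fin n → ℝ) :
    pd σ (fun y => f y + g y) x = pd σ f x + pd σ g x := by
  unfold pd
  rw [fderiv_fun_add (hf.differentiable (by simp) x) (hg.differentiable (by simp) x)]
  simp

lemma pd_neg {σ : Fin n} (f : (Fin n → ℝ) → ℝ) (x : Fin n → ℝ) :
    pd σ (fun y => -f y) x = - pd σ f x := by
  unfold pd
  rw [fderiv_fun_neg]
  simp

lemma pd_mul {σ : Fin n} {f g : (Fin n → ℝ) → ℝ} (hf : ContDiff ℝ (⊤ : ℕ∞) f)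
    (hg : ContDiff ℝ (⊤ : ℕ∞) g) (x : Fin n → ℝ) :
    pd σ (fun y => f y * g y) x = pd σ f x * g x + f x * pd σ g x := by
  unfold pd
  rw [fderiv_fun_mul (hf.differentiable (by simp) x) (hg.differentiable (by simp) x)]
  simp
  ring

lemma pd_sum {σ : Fin n} {ι : Type*} (s : Finset ι) {f : ι → (Fin n → ℝ) → ℝ}
    (hf : ∀ j ∈ s, ContDiff ℝ (⊤ : ℕ∞) (f j)) (x : Fin n → ℝ) :
    pd σ (fun y => ∑ j ∈ s, f j y) x = ∑ j ∈ s, pd σ (f j) x := by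
  unfold pd
  rw [fderiv_fun_sum (fun j hj => (hf j hj).differentiable (by simp) x)]
  simp

lemma pd_pd {f : (Fin n → ℝ) → ℝ} (hf : ContDiff ℝ (⊤ : ℕ∞) f) (σ τ : Fin n) (x : Fin n → ℝ) :
    pd σ (fun y => pd τ f y) x = fderiv ℝ (fderiv ℝ f) x (Pi.single σ 1) (Pi.single τ 1) := by
  unfold pd
  have hdc : DifferentiableAt ℝ (fderiv ℝ f) x :=
    ((hf.fderiv_right (m := 1) (WithTop.coe_le_coe.mpr le_top)).differentiable one_ne_zero) x
  rw [fderiv_clm_apply hdc (differentiableAt_const _)]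
  simp

lemma pd_comm {f : (Fin n → ℝ) → ℝ} (hf : ContDiff ℝ (⊤ : ℕ∞) f) (σ τ : Fin n) (x : Fin n → ℝ) :
    pd σ (fun y => pd τ f y) x = pd τ (fun y => pd σ f y) x := by
  rw [pd_pd hf, pd_pd hf]
  exact (hf.contDiffAt.isSymmSndFDerivAt (by rw [minSmoothness_of_isRCLikeNormedField]; exact WithTop.coe_le_coe.mpr le_top)) _ _

end PdAux

/-- If `μ > 0` is smooth and `ω` is an antisymmetric Poisson bivector with `∂_i(μω^{ij}) = 0`,
then `∂_l(μ ω^{ij}∂_jω^{lk})` is symmetric in `(i,k)`. -/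
theorem trace_matrix_symmetric (Nn : ℕ)
    (μ : (Fin Nn → ℝ) → ℝ) (hμ : ContDiff ℝ (⊤ : ℕ∞) μ) (hμpos : ∀ x, 0 < μ x)
    (ω : (Fin Nn → ℝ) → Matrix (Fin Nn) (Fin Nn) ℝ)
    (hω : ∀ i j, ContDiff ℝ (⊤ : ℕ∞) fun x => ω x i j)
    (hanti : ∀ x i j, ω x i j = - ω x j i)
    (hjac : ∀ x i j k,
      (∑ l, ω x i l * pd l (fun y => ω y j k) x) +
      (∑ l, ω x k l * pd l (fun y => ω y i j) x) +
      (∑ l, ω x j l * pd l (fun y => ω y k i) x) = 0)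
    (hdiv : ∀ x j, (∑ i, pd i (fun y => μ y * ω y i j) x) = 0) :
    ∀ (x : Fin Nn → ℝ) (i k : Fin Nn),
      (∑ l, pd l (fun y => μ y * ∑ j, ω y i j * pd j (fun z => ω z l k) y) x) =
      (∑ l, pd l (fun y => μ y * ∑ j, ω y k j * pd j (fun z => ω z l i) y) x) := by
  intro x i k
  -- basic smoothness facts
  have cpdω : ∀ (j a b : Fin Nn), ContDiff ℝ (⊤ : ℕ∞) fun y => pd j (fun z => ω z a b) y :=
    fun j a b => pd_contDiff (hω a b)
  have cprod : ∀ (a j l b : Fin Nn),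
      ContDiff ℝ (⊤ : ℕ∞) fun y => ω y a j * pd j (fun z => ω z l b) y :=
    fun a j l b => (hω a j).mul (cpdω j l b)
  have cinner : ∀ (a l b : Fin Nn),
      ContDiff ℝ (⊤ : ℕ∞) fun y => ∑ j, ω y a j * pd j (fun z => ω z l b) y :=
    fun a l b => ContDiff.sum (fun j _ => cprod a j l b)
  -- antisymmetry in the derivative
  have hpdanti : ∀ (j a b : Fin Nn) (y : Fin Nn → ℝ),
      pd j (fun z => ω z a b) y = - pd j (fun z => ω z b a) y := by
    intro j a b y
    rw [pd_congr (fun z => hanti z a b), pd_neg]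
  -- Step A: Jacobi rewrite of the l-th summand on the left
  have stepA : ∀ l : Fin Nn, ∀ y : Fin Nn → ℝ,
      μ y * ∑ j, ω y i j * pd j (fun z => ω z l k) y
        = -(μ y * ∑ j, ω y k j * pd j (fun z => ω z i l) y)
          + -(μ y * ∑ j, ω y l j * pd j (fun z => ω z k i) y) := by
    intro l y
    have hJ := hjac y i l k
    have : (∑ j, ω y i j * pd j (fun z => ω z l k) y)
        = -(∑ j, ω y k j * pd j (fun z => ω z i l) y)
          - (∑ j, ω y l j * pd j (fun z => ω z k i) y) := by linarith
    rw [this]; ring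
  -- Step B: antisymmetry rewrite of the first piece
  have stepB : ∀ l : Fin Nn, ∀ y : Fin Nn → ℝ,
      -(μ y * ∑ j, ω y k j * pd j (fun z => ω z i l) y)
        = μ y * ∑ j, ω y k j * pd j (fun z => ω z l i) y := by
    intro l y
    have h1 : ∀ j : Fin Nn, pd j (fun z => ω z i l) y = - pd j (fun z => ω z l i) y :=
      fun j => hpdanti j i l y
    simp only [h1, mul_neg, Finset.sum_neg_distrib, neg_neg]
  -- decompose the left-hand side
  have hsplit : ∀ l : Fin Nn,
      pd l (fun y => μ y * ∑ j, ω y i j * pd j (fun z => ω z l k) y) x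
        = pd l (fun y => μ y * ∑ j, ω y k j * pd j (fun z => ω z l i) y) x
          + pd l (fun y => -(μ y * ∑ j, ω y l j * pd j (fun z => ω z k i) y)) x := by
    intro l
    rw [pd_congr (stepA l) x]
    rw [pd_add ((hμ.mul (cinner k i l)).neg) ((hμ.mul (cinner l k i)).neg)]
    congr 1
    exact pd_congr (fun y => by rw [stepB l y]) x
  -- the extra term vanishes
  have hzero : (∑ l, pd l (fun y => μ y * ∑ j, ω y l j * pd j (fun z => ω z k i) y) x) = 0 := by
    have hrw : ∀ l : Fin Nn,
        pd l (fun y => μ y * ∑ j, ω y l j * pd j (fun z => ω z k i) y) x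
          = ∑ j, (pd l (fun y => μ y * ω y l j) x * pd j (fun z => ω z k i) x
              + (μ x * ω x l j) * pd l (fun y => pd j (fun z => ω z k i) y) x) := by
      intro l
      have : ∀ y : Fin Nn → ℝ,
          μ y * ∑ j, ω y l j * pd j (fun z => ω z k i) y
            = ∑ j, (μ y * ω y l j) * pd j (fun z => ω z k i) y := by
        intro y
        rw [Finset.mul_sum]
        exact Finset.sum_congr rfl (fun j _ => by ring)
      rw [pd_congr this x,
        pd_sum Finset.univ (fun j _ => (hμ.mul (hω l j)).mul (cpdω j k i)) x]
      exact Finset.sum_congr rfl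
        (fun j _ => pd_mul (hμ.mul (hω l j)) (cpdω j k i) x)
    simp only [hrw]
    rw [Finset.sum_comm]
    have : ∀ j : Fin Nn,
        (∑ l, (pd l (fun y => μ y * ω y l j) x * pd j (fun z => ω z k i) x
            + (μ x * ω x l j) * pd l (fun y => pd j (fun z => ω z k i) y) x))
          = ∑ l, (μ x * ω x l j) * pd l (fun y => pd j (fun z => ω z k i) y) x := by
      intro j
      rw [Finset.sum_add_distrib, ← Finset.sum_mul, hdiv x j, zero_mul, zero_add]
    rw [Finset.sum_congr rfl (fun j _ => this j)]
    -- now use antisymmetry of ω and symmetry of second derivatives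
    set T := ∑ j, ∑ l, (μ x * ω x l j) * pd l (fun y => pd j (fun z => ω z k i) y) x with hT
    have hTneg : T = -T := by
      nth_rewrite 1 [hT]
      rw [Finset.sum_comm]
      have : ∀ l j : Fin Nn,
          (μ x * ω x j l) * pd j (fun y => pd l (fun z => ω z k i) y) x
            = -((μ x * ω x l j) * pd l (fun y => pd j (fun z => ω z k i) y) x) := by
        intro l j
        rw [hanti x j l, pd_comm (hω k i) j l x]
        ring
      rw [Finset.sum_congr rfl (fun a (_ : a ∈ Finset.univ) =>
        Finset.sum_congr rfl (fun b (_ : b ∈ Finset.univ) => this b a))]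
      simp only [Finset.sum_neg_distrib]
      rfl
    linarith
  -- combine
  calc (∑ l, pd l (fun y => μ y * ∑ j, ω y i j * pd j (fun z => ω z l k) y) x)
      = ∑ l, (pd l (fun y => μ y * ∑ j, ω y k j * pd j (fun z => ω z l i) y) x
          + pd l (fun y => -(μ y * ∑ j, ω y l j * pd j (fun z => ω z k i) y)) x) :=
        Finset.sum_congr rfl (fun l _ => hsplit l)
    _ = (∑ l, pd l (fun y => μ y * ∑ j, ω y k j * pd j (fun z => ω z l i) y) x)
          + ∑ l, - pd l (fun y => μ y * ∑ j, ω y l j * pd j (fun z => ω z k i) y) x := by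
        rw [Finset.sum_add_distrib]
        congr 1
        exact Finset.sum_congr rfl (fun l _ => pd_neg _ x)
    _ = (∑ l, pd l (fun y => μ y * ∑ j, ω y k j * pd j (fun z => ω z l i) y) x) := by
        rw [Finset.sum_neg_distrib, hzero, neg_zero, add_zero]
end
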